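/- arXiv:1111.0424 — 6 statements merged into one kernel-verified Lean document; each statement's English description precedes it below -/
import Mathlib

section
/- Let α and α₁ be admissible curves in the Galilean space G₃ with curvature of α₁ everywhere positive, let s : ℝ → ℝ and λ : ℝ → ℝ be smooth, and suppose α(s(u)) = α₁(u) + λ(u)·B₁(u) for all u, where T₁, N₁, B₁ denote the Frenet frame of α₁. If for every u the tangent vector T(s(u)) of α lies in the plane spanned by T₁(u) and N₁(u), then λ'(u) = 0 for all u; that is, λ is constant. -/
/- Galilean space G₃ identified with ℝ³ = ℝ × ℝ × ℝ.
An admissible curve is α(s) = (s, y(s), z(s)) with y, z smooth. -/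

noncomputable section

/-- A Galilean admissible curve `α(s) = (s, y(s), z(s))`. -/
def Gcurve (y z : ℝ → ℝ) : ℝ → ℝ × ℝ × ℝ :=
  fun s => (s, y s, z s)

/-- Curvature of the Galilean admissible curve `s ↦ (s, y s, z s)`. -/
def Gkappa (y z : ℝ → ℝ) : ℝ → ℝ :=
  fun s => Real.sqrt (deriv (deriv y) s ^ 2 + deriv (deriv z) s ^ 2)

/-- Torsion `det(α', α'', α''')/κ²` of the Galilean admissible curve. -/
def Gtau (y z : ℝ → ℝ) : ℝ → ℝ :=
  fun s => (deriv (deriv y) s * deriv (deriv (deriv z)) s -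
    deriv (deriv z) s * deriv (deriv (deriv y)) s) / (Gkappa y z s) ^ 2

/-- Tangent vector `T(s) = (1, y'(s), z'(s))`. -/
def GT (y z : ℝ → ℝ) : ℝ → ℝ × ℝ × ℝ :=
  fun s => (1, deriv y s, deriv z s)

/-- Principal normal vector `N(s) = (1/κ(s)) • (0, y''(s), z''(s))`. -/
def GN (y z : ℝ → ℝ) : ℝ → ℝ × ℝ × ℝ :=
  fun s => (Gkappa y z s)⁻¹ • ((0 : ℝ), deriv (deriv y) s, deriv (deriv z) s)

/-- Binormal vector `B(s) = (1/κ(s)) • (0, −z''(s), y''(s))`. -/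
def GB (y z : ℝ → ℝ) : ℝ → ℝ × ℝ × ℝ :=
  fun s => (Gkappa y z s)⁻¹ • ((0 : ℝ), -deriv (deriv z) s, deriv (deriv y) s)

/-- If `α(s(u)) = α₁(u) + λ(u) • B₁(u)` with the tangent of `α` lying in the
plane spanned by `T₁` and `N₁` at corresponding points, then `λ' = 0`,
i.e. `λ` is constant. -/
theorem galilean_mannheim_distance_constant
    (y z y₁ z₁ : ℝ → ℝ)
    (hy : ContDiff ℝ (⊤ : ℕ∞) y) (hz : ContDiff ℝ (⊤ : ℕ∞) z)
    (hy₁ : ContDiff ℝ (⊤ : ℕ∞) y₁) (hz₁ : ContDiff ℝ (⊤ : ℕ∞) z₁)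
    (hκ₁ : ∀ u, 0 < Gkappa y₁ z₁ u)
    (s lam : ℝ → ℝ) (hs : ContDiff ℝ (⊤ : ℕ∞) s) (hlam : ContDiff ℝ (⊤ : ℕ∞) lam)
    (hrel : ∀ u, Gcurve y z (s u) = Gcurve y₁ z₁ u + lam u • GB y₁ z₁ u)
    (hT : ∀ u, GT y z (s u) ∈ Submodule.span ℝ {GT y₁ z₁ u, GN y₁ z₁ u}) :
    ∀ u, deriv lam u = 0 := by
  -- Notation
  set A := deriv (deriv y₁) with hAdef
  set Bf := deriv (deriv z₁) with hBdef
  set κ := Gkappa y₁ z₁ with hκdef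
  have hκne : ∀ v, κ v ≠ 0 := fun v => (hκ₁ v).ne'
  have hκsq : ∀ v, κ v ^ 2 = A v ^ 2 + Bf v ^ 2 := fun v =>
    Real.sq_sqrt (by positivity)
  -- unpack the curve relation
  have hrel' : ∀ v, s v = v ∧
      y v = y₁ v + -(lam v * ((κ v)⁻¹ * Bf v)) ∧
      z v = z₁ v + lam v * ((κ v)⁻¹ * A v) := by
    intro v
    have h := hrel v
    simp only [Gcurve, GB, Prod.ext_iff, Prod.smul_mk, Prod.mk_add_mk, smul_eq_mul,
      mul_zero, mul_neg, add_zero, Prod.fst_add, Prod.snd_add] at h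
    obtain ⟨h1, h2, h3⟩ := h
    rw [h1] at h2 h3
    exact ⟨h1, h2, h3⟩
  -- the auxiliary functions F = y₁ - y, G = z - z₁
  set F : ℝ → ℝ := fun v => y₁ v - y v with hFdef
  set G : ℝ → ℝ := fun v => z v - z₁ v with hGdef
  have hFval : ∀ v, F v = lam v * ((κ v)⁻¹ * Bf v) := fun v => by
    have := (hrel' v).2.1; simp only [hFdef]; linarith
  have hGval : ∀ v, G v = lam v * ((κ v)⁻¹ * A v) := fun v => by
    have := (hrel' v).2.2; simp only [hGdef]; linarith
  have hFdiff : Differentiable ℝ F := (hy₁.differentiable (by simp)).sub (hy.differentiable (by simp))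
  have hGdiff : Differentiable ℝ G := (hz.differentiable (by simp)).sub (hz₁.differentiable (by simp))
  have hlamdiff : Differentiable ℝ lam := hlam.differentiable (by simp)
  -- λ² = F² + G²
  have hlamsq : ∀ v, lam v ^ 2 = F v ^ 2 + G v ^ 2 := by
    intro v
    rw [hFval v, hGval v]
    have h := hκsq v
    have hne := hκne v
    field_simp
    linear_combination lam v ^ 2 * h
  -- key: λ·λ' = 0 everywhere
  have hkey : ∀ v, lam v * deriv lam v = 0 := by
    intro v
    obtain ⟨a, b, hab⟩ := Submodule.mem_span_pair.mp (hT v)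
    simp only [GT, GN, Prod.ext_iff, Prod.smul_mk, Prod.mk_add_mk, smul_eq_mul,
      mul_zero, add_zero, mul_one, Prod.fst_add, Prod.snd_add, (hrel' v).1] at hab
    obtain ⟨ha1, h2, h3⟩ := hab
    subst ha1
    -- derivatives of F and G at v
    have hF' : deriv F v = -(b * ((κ v)⁻¹ * A v)) := by
      rw [hFdef, deriv_fun_sub ((hy₁.differentiable (by simp)) v)
        ((hy.differentiable (by simp)) v)]
      linarith
    have hG' : deriv G v = b * ((κ v)⁻¹ * Bf v) := by
      rw [hGdef, deriv_fun_sub ((hz.differentiable (by simp)) v)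
        ((hz₁.differentiable (by simp)) v)]
      linarith
    -- derivative of λ² at v, two ways
    have hD1 : HasDerivAt (fun w => F w ^ 2 + G w ^ 2)
        ((2 : ℕ) * F v ^ 1 * deriv F v + (2 : ℕ) * G v ^ 1 * deriv G v) v :=
      (((hFdiff v).hasDerivAt).pow 2).add (((hGdiff v).hasDerivAt).pow 2)
    have hD2 : HasDerivAt (fun w => lam w ^ 2) ((2 : ℕ) * lam v ^ 1 * deriv lam v) v :=
      ((hlamdiff v).hasDerivAt).pow 2
    have heq : (fun w => lam w ^ 2) = fun w => F w ^ 2 + G w ^ 2 := funext hlamsq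
    have h0 : (2 : ℕ) * lam v ^ 1 * deriv lam v
        = (2 : ℕ) * F v ^ 1 * deriv F v + (2 : ℕ) * G v ^ 1 * deriv G v := by
      rw [← hD1.deriv, ← hD2.deriv, heq]
    rw [hFval v, hGval v, hF', hG'] at h0
    push_cast at h0
    nlinarith [h0]
  -- λ² is constant
  have hsqconst : ∀ x w, lam x ^ 2 = lam w ^ 2 := by
    refine is_const_of_deriv_eq_zero (fun v => (hlamdiff v).pow 2) (fun v => ?_)
    have hD2 : HasDerivAt (fun w => lam w ^ 2) ((2 : ℕ) * lam v ^ 1 * deriv lam v) v :=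
      ((hlamdiff v).hasDerivAt).pow 2
    rw [hD2.deriv]
    push_cast
    have := hkey v
    nlinarith [this]
  -- conclude
  intro u
  by_cases h : lam u = 0
  · have hzero : lam = fun _ => (0 : ℝ) := by
      funext w
      have := hsqconst w u
      rw [h] at this
      nlinarith [this]
    rw [hzero]
    simp
  · have := hkey u
    exact (mul_eq_zero.mp this).resolve_left h
end
end

section
/- (Remark 3.2) Let α be an admissible curve in the Galilean space G₃ with curvature κ everywhere positive, let λ be a nonzero real constant with λ·τ'(s) ≠ 0 for all s, and set α₁(s) = α(s) + λ·N(s). Then the binormal line of α₁ coincides with the principal normal line of α at every point (i.e. the binormal vector of the admissible curve α₁ is parallel to N(s) for all s) if and only if κ(s) = λ·τ(s)² for all s. -/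
/- Galilean space G₃ identified with ℝ³ = ℝ × ℝ × ℝ.
An admissible curve is α(s) = (s, y(s), z(s)) with y, z smooth. -/

noncomputable section

private lemma smooth_diff {f : ℝ → ℝ} (hf : ContDiff ℝ (⊤ : ℕ∞) f) :
    Differentiable ℝ f :=
  hf.differentiable (by simp)

private lemma smooth_deriv {f : ℝ → ℝ} (hf : ContDiff ℝ (⊤ : ℕ∞) f) :
    ContDiff ℝ (⊤ : ℕ∞) (deriv f) :=
  (contDiff_infty_iff_deriv.mp hf).2

/-- Remark 3.2: for `α₁ = α + λ • N` (with `λ ≠ 0` constant and `λτ'` nowhere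
zero), the binormal of `α₁` is parallel to the principal normal `N` of `α` at
every point if and only if `κ = λτ²`; i.e. `α` is a Mannheim curve with
partner `α₁` iff `κ = λτ²` for a constant `λ`. -/
theorem galilean_mannheim_characterization
    (y z : ℝ → ℝ)
    (hy : ContDiff ℝ (⊤ : ℕ∞) y) (hz : ContDiff ℝ (⊤ : ℕ∞) z)
    (hκ : ∀ s, 0 < Gkappa y z s)
    (lam : ℝ) (hlam : lam ≠ 0)
    (hτ' : ∀ s, lam * deriv (Gtau y z) s ≠ 0)
    (α₁ : ℝ → ℝ × ℝ × ℝ) (hα₁ : α₁ = fun s => Gcurve y z s + lam • GN y z s)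
    (y₁ z₁ : ℝ → ℝ)
    (hy₁ : y₁ = fun s => (α₁ s).2.1) (hz₁ : z₁ = fun s => (α₁ s).2.2) :
    (∀ s : ℝ, ∃ c : ℝ, c ≠ 0 ∧ GB y₁ z₁ s = c • GN y z s) ↔
      (∀ s : ℝ, Gkappa y z s = lam * (Gtau y z s) ^ 2) := by
  -- abbreviations
  set a : ℝ → ℝ := deriv (deriv y) with ha_def
  set b : ℝ → ℝ := deriv (deriv z) with hb_def
  set K : ℝ → ℝ := Gkappa y z with hK_def
  set T : ℝ → ℝ := Gtau y z with hT_def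
  -- interface facts using definitional unfolding
  have hKsqrt : K = fun s => Real.sqrt (a s ^ 2 + b s ^ 2) := rfl
  have hTquot : T = fun s => (a s * deriv b s - b s * deriv a s) / (K s) ^ 2 := rfl
  have hGN : GN y z = fun s => (K s)⁻¹ • ((0 : ℝ), a s, b s) := rfl
  have hy₁e0 : y₁ = fun s => y s + lam * ((K s)⁻¹ * a s) := by
    rw [hy₁, hα₁]; rfl
  have hz₁e0 : z₁ = fun s => z s + lam * ((K s)⁻¹ * b s) := by
    rw [hz₁, hα₁]; rfl
  clear_value a b K T
  clear hα₁ hy₁ hz₁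
  -- smoothness
  have hysm : ContDiff ℝ (⊤ : ℕ∞) y := hy.of_le (by simp)
  have hzsm : ContDiff ℝ (⊤ : ℕ∞) z := hz.of_le (by simp)
  have ha : ContDiff ℝ (⊤ : ℕ∞) a := by
    rw [ha_def]; exact smooth_deriv (smooth_deriv hysm)
  have hb : ContDiff ℝ (⊤ : ℕ∞) b := by
    rw [hb_def]; exact smooth_deriv (smooth_deriv hzsm)
  have hdy2 : ∀ s, HasDerivAt (deriv y) (a s) s := by
    intro s; rw [ha_def]; exact (smooth_diff (smooth_deriv hysm) s).hasDerivAt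
  have hdz2 : ∀ s, HasDerivAt (deriv z) (b s) s := by
    intro s; rw [hb_def]; exact (smooth_diff (smooth_deriv hzsm) s).hasDerivAt
  have ha' : ContDiff ℝ (⊤ : ℕ∞) (deriv a) := smooth_deriv ha
  have hb' : ContDiff ℝ (⊤ : ℕ∞) (deriv b) := smooth_deriv hb
  have hKne : ∀ s, K s ≠ 0 := fun s => (hκ s).ne'
  have hK2 : ∀ s, K s ^ 2 = a s ^ 2 + b s ^ 2 := fun s => by
    rw [hKsqrt]; exact Real.sq_sqrt (by positivity)
  have hab : ∀ s, a s ^ 2 + b s ^ 2 ≠ 0 := fun s => by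
    rw [← hK2 s]; exact pow_ne_zero _ (hKne s)
  -- formula for T without K
  have hTe : T = fun s => (a s * deriv b s - b s * deriv a s) / (a s ^ 2 + b s ^ 2) := by
    rw [hTquot]; funext s; rw [hK2 s]
  -- derivative of K
  have hKd : ∀ s, HasDerivAt K ((a s * deriv a s + b s * deriv b s) / K s) s := by
    intro s
    have h1 : HasDerivAt (fun t => a t ^ 2 + b t ^ 2)
        (2 * a s ^ 1 * deriv a s + 2 * b s ^ 1 * deriv b s) s :=
      ((smooth_diff ha s).hasDerivAt.pow 2).add ((smooth_diff hb s).hasDerivAt.pow 2)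
    have h2 := h1.sqrt (hab s)
    have hs : Real.sqrt (a s ^ 2 + b s ^ 2) = K s := by rw [hKsqrt]
    have h3 : HasDerivAt K ((2 * a s ^ 1 * deriv a s + 2 * b s ^ 1 * deriv b s) /
        (2 * Real.sqrt (a s ^ 2 + b s ^ 2))) s := by rw [hKsqrt]; exact h2
    convert h3 using 1
    rw [hs, div_eq_div_iff (hKne s) (mul_ne_zero two_ne_zero (hKne s))]
    ring
  -- T is differentiable
  have hTd : ∀ s, HasDerivAt T (deriv T s) s := by
    intro s
    apply DifferentiableAt.hasDerivAt
    rw [hTe]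
    exact (((smooth_diff ha s).mul (smooth_diff hb' s)).sub
      ((smooth_diff hb s).mul (smooth_diff ha' s))).div
      (((smooth_diff ha s).pow 2).add ((smooth_diff hb s).pow 2)) (hab s)
  -- derivative of a/K and b/K
  have hNy : ∀ s, HasDerivAt (fun t => a t / K t) (-(T s * (b s / K s))) s := by
    intro s
    have h := (smooth_diff ha s).hasDerivAt.div (hKd s) (hKne s)
    refine h.congr_deriv (Eq.symm ?_)
    rw [hTe]
    have h2 := hK2 s
    field_simp [hKne s, hab s]
    linear_combination (-(a s * deriv b s * b s) - a s ^ 2 * deriv a s) * h2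
  have hNz : ∀ s, HasDerivAt (fun t => b t / K t) (T s * (a s / K s)) s := by
    intro s
    have h := (smooth_diff hb s).hasDerivAt.div (hKd s) (hKne s)
    refine h.congr_deriv (Eq.symm ?_)
    rw [hTe]
    have h2 := hK2 s
    field_simp [hKne s, hab s]
    linear_combination (-(a s * b s * deriv a s) - deriv b s * b s ^ 2) * h2
  -- explicit form of y₁, z₁
  have hy₁e : y₁ = fun s => y s + lam * (a s / K s) := by
    rw [hy₁e0]; funext s; rw [div_eq_inv_mul]
  have hz₁e : z₁ = fun s => z s + lam * (b s / K s) := by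
    rw [hz₁e0]; funext s; rw [div_eq_inv_mul]
  -- first derivative of y₁, z₁
  have hy₁d : ∀ s, HasDerivAt y₁ (deriv y s + lam * -(T s * (b s / K s))) s := by
    intro s
    rw [hy₁e]
    exact (smooth_diff hysm s).hasDerivAt.add ((hNy s).const_mul lam)
  have hz₁d : ∀ s, HasDerivAt z₁ (deriv z s + lam * (T s * (a s / K s))) s := by
    intro s
    rw [hz₁e]
    exact (smooth_diff hzsm s).hasDerivAt.add ((hNz s).const_mul lam)
  have hy₁deq : deriv y₁ = fun s => deriv y s + lam * -(T s * (b s / K s)) :=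
    funext fun s => (hy₁d s).deriv
  have hz₁deq : deriv z₁ = fun s => deriv z s + lam * (T s * (a s / K s)) :=
    funext fun s => (hz₁d s).deriv
  -- second derivatives
  have hy₁dd : ∀ s, deriv (deriv y₁) s =
      ((K s - lam * T s ^ 2) * a s - (lam * deriv T s) * b s) / K s := by
    intro s
    rw [hy₁deq]
    have h1 : HasDerivAt (fun t => T t * (b t / K t))
        (deriv T s * (b s / K s) + T s * (T s * (a s / K s))) s :=
      (hTd s).mul (hNz s)
    have h2 : HasDerivAt (fun t => deriv y t + lam * -(T t * (b t / K t)))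
        (a s + lam * -(deriv T s * (b s / K s) + T s * (T s * (a s / K s)))) s :=
      (hdy2 s).add (h1.neg.const_mul lam)
    rw [h2.deriv]
    field_simp [hKne s]
    ring
  have hz₁dd : ∀ s, deriv (deriv z₁) s =
      ((K s - lam * T s ^ 2) * b s + (lam * deriv T s) * a s) / K s := by
    intro s
    rw [hz₁deq]
    have h1 : HasDerivAt (fun t => T t * (a t / K t))
        (deriv T s * (a s / K s) + T s * -(T s * (b s / K s))) s :=
      (hTd s).mul (hNy s)
    have h2 : HasDerivAt (fun t => deriv z t + lam * (T t * (a t / K t)))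
        (b s + lam * (deriv T s * (a s / K s) + T s * -(T s * (b s / K s)))) s :=
      (hdz2 s).add (h1.const_mul lam)
    rw [h2.deriv]
    field_simp [hKne s]
    ring
  -- curvature of α₁
  have hK1 : ∀ s, Gkappa y₁ z₁ s =
      Real.sqrt ((K s - lam * T s ^ 2) ^ 2 + (lam * deriv T s) ^ 2) := by
    intro s
    show Real.sqrt (deriv (deriv y₁) s ^ 2 + deriv (deriv z₁) s ^ 2) = _
    rw [hy₁dd s, hz₁dd s]
    congr 1
    have h2 := hK2 s
    field_simp [hKne s]
    linear_combination (-((K s - lam * T s ^ 2) ^ 2 + (lam * deriv T s) ^ 2)) * h2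
  have hK1pos : ∀ s, 0 < Gkappa y₁ z₁ s := by
    intro s
    rw [hK1 s]
    have h := hτ' s
    positivity
  -- main equivalence
  constructor
  · intro h s
    obtain ⟨c, hc, heq⟩ := h s
    have e2 := congrArg (fun p => p.2.1) heq
    have e3 := congrArg (fun p => p.2.2) heq
    rw [hGN] at e2 e3
    simp only [GB, Prod.smul_def, smul_eq_mul] at e2 e3
    rw [hy₁dd s] at e3
    rw [hz₁dd s] at e2
    have hκ₁ := (hK1pos s).ne'
    have key : (K s - lam * T s ^ 2) * ((a s ^ 2 + b s ^ 2) * K s) = 0 := by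
      field_simp [hKne s, hκ₁] at e2 e3
      linear_combination (K s) * ((a s) * e3 - (b s) * e2)
    have hD : K s - lam * T s ^ 2 = 0 := by
      rcases mul_eq_zero.mp key with h' | h'
      · exact h'
      · exact absurd h' (mul_ne_zero (hab s) (hKne s))
    linarith
  · intro h s
    have hD : K s - lam * T s ^ 2 = 0 := by rw [h s]; ring
    refine ⟨-(lam * deriv T s) / Gkappa y₁ z₁ s, ?_, ?_⟩
    · exact div_ne_zero (neg_ne_zero.mpr (hτ' s)) (hK1pos s).ne'
    · show (Gkappa y₁ z₁ s)⁻¹ • ((0:ℝ), -deriv (deriv z₁) s, deriv (deriv y₁) s) = _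
      rw [hGN, hy₁dd s, hz₁dd s, hD]
      have hκ₁ := (hK1pos s).ne'
      simp only [Prod.smul_def, smul_eq_mul]
      refine Prod.ext ?_ (Prod.ext ?_ ?_)
      · simp
      · show (Gkappa y₁ z₁ s)⁻¹ * -((0 * b s + lam * deriv T s * a s) / K s) =
          -(lam * deriv T s) / Gkappa y₁ z₁ s * ((K s)⁻¹ * a s)
        field_simp
        ring
      · show (Gkappa y₁ z₁ s)⁻¹ * ((0 * a s - lam * deriv T s * b s) / K s) =
          -(lam * deriv T s) / Gkappa y₁ z₁ s * ((K s)⁻¹ * b s)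
        field_simp
        ring
end
end

section
/- (Theorem 4.2) Let α be an admissible curve of Type I in the pseudo-Galilean space G₃¹ with y''(s)² − z''(s)² > 0 for all s, let λ be a nonzero real constant, and set α₁(s) = α(s) + λ·N(s). Then the Mannheim condition that N(s) is the binormal direction of α₁, expressed as ⟨α₁''(s), N(s)⟩ = 0 for all s (where ⟨·,·⟩ is the pseudo-Galilean scalar product of isotropic vectors), holds if and only if κ(s) = −λ·τ(s)² for all s. -/
/- Pseudo-Galilean space G₃¹ identified with ℝ³ = ℝ × ℝ × ℝ.
An admissible curve of Type I is α(s) = (s, y(s), z(s)) with y''² − z''² ≠ 0. -/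

noncomputable section

/-- A pseudo-Galilean admissible curve `α(s) = (s, y(s), z(s))`. -/
def PGcurve (y z : ℝ → ℝ) : ℝ → ℝ × ℝ × ℝ :=
  fun s => (s, y s, z s)

/-- Curvature `κ(s) = √|y''(s)² − z''(s)²|` of a Type I admissible curve in `G₃¹`. -/
def PGkappa (y z : ℝ → ℝ) : ℝ → ℝ :=
  fun s => Real.sqrt |deriv (deriv y) s ^ 2 - deriv (deriv z) s ^ 2|

/-- Torsion `det(α', α'', α''')/κ²` of a Type I admissible curve in `G₃¹`. -/
def PGtau (y z : ℝ → ℝ) : ℝ → ℝ :=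
  fun s => (deriv (deriv y) s * deriv (deriv (deriv z)) s -
    deriv (deriv z) s * deriv (deriv (deriv y)) s) / (PGkappa y z s) ^ 2

/-- Tangent vector `T(s) = (1, y'(s), z'(s))`. -/
def PGT (y z : ℝ → ℝ) : ℝ → ℝ × ℝ × ℝ :=
  fun s => (1, deriv y s, deriv z s)

/-- Principal normal vector `N(s) = (1/κ(s)) • (0, y''(s), z''(s))`. -/
def PGN (y z : ℝ → ℝ) : ℝ → ℝ × ℝ × ℝ :=
  fun s => (PGkappa y z s)⁻¹ • ((0 : ℝ), deriv (deriv y) s, deriv (deriv z) s)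

/-- Binormal vector `B(s) = (1/κ(s)) • (0, z''(s), y''(s))`. -/
def PGB (y z : ℝ → ℝ) : ℝ → ℝ × ℝ × ℝ :=
  fun s => (PGkappa y z s)⁻¹ • ((0 : ℝ), deriv (deriv z) s, deriv (deriv y) s)

/-- Pseudo-Galilean scalar product of isotropic vectors `(0, v₂, v₃)`,
`(0, w₂, w₃)`: `⟨v, w⟩ = v₂w₂ − v₃w₃`. -/
def PGdot (v w : ℝ × ℝ × ℝ) : ℝ := v.2.1 * w.2.1 - v.2.2 * w.2.2

theorem key
    (y z : ℝ → ℝ)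
    (hy : ContDiff ℝ (⊤ : ℕ∞) y) (hz : ContDiff ℝ (⊤ : ℕ∞) z)
    (hsp : ∀ s, 0 < deriv (deriv y) s ^ 2 - deriv (deriv z) s ^ 2)
    (lam : ℝ)
    (α₁ : ℝ → ℝ × ℝ × ℝ) (hα₁ : α₁ = fun s => PGcurve y z s + lam • PGN y z s) :
    ∀ s : ℝ, PGdot (deriv (deriv α₁) s) (PGN y z s) =
      PGkappa y z s + lam * (PGtau y z s) ^ 2 := by
  -- abbreviations
  set A : ℝ → ℝ := deriv (deriv y) with hA
  set B : ℝ → ℝ := deriv (deriv z) with hB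
  set A1 : ℝ → ℝ := deriv A with hA1
  set B1 : ℝ → ℝ := deriv B with hB1
  set K : ℝ → ℝ := fun s => Real.sqrt (A s ^ 2 - B s ^ 2) with hK
  -- smoothness
  have hy' : ContDiff ℝ (⊤ : ℕ∞) y := hy.of_le (by simp)
  have hz' : ContDiff ℝ (⊤ : ℕ∞) z := hz.of_le (by simp)
  have hyc1 : ContDiff ℝ (⊤ : ℕ∞) (deriv y) := (contDiff_infty_iff_deriv.mp hy').2
  have hyc2 : ContDiff ℝ (⊤ : ℕ∞) A := (contDiff_infty_iff_deriv.mp hyc1).2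
  have hyc3 : ContDiff ℝ (⊤ : ℕ∞) A1 := (contDiff_infty_iff_deriv.mp hyc2).2
  have hzc1 : ContDiff ℝ (⊤ : ℕ∞) (deriv z) := (contDiff_infty_iff_deriv.mp hz').2
  have hzc2 : ContDiff ℝ (⊤ : ℕ∞) B := (contDiff_infty_iff_deriv.mp hzc1).2
  have hzc3 : ContDiff ℝ (⊤ : ℕ∞) B1 := (contDiff_infty_iff_deriv.mp hzc2).2
  have hyd : ∀ s, HasDerivAt y (deriv y s) s := fun s => (hy.differentiable (by simp) s).hasDerivAt
  have hzd : ∀ s, HasDerivAt z (deriv z s) s := fun s => (hz.differentiable (by simp) s).hasDerivAt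
  have hy1d : ∀ s, HasDerivAt (deriv y) (A s) s := fun s => (hyc1.differentiable (by simp) s).hasDerivAt
  have hz1d : ∀ s, HasDerivAt (deriv z) (B s) s := fun s => (hzc1.differentiable (by simp) s).hasDerivAt
  have hAd : ∀ s, HasDerivAt A (A1 s) s := fun s => (hyc2.differentiable (by simp) s).hasDerivAt
  have hBd : ∀ s, HasDerivAt B (B1 s) s := fun s => (hzc2.differentiable (by simp) s).hasDerivAt
  have hA1d : ∀ s, HasDerivAt A1 (deriv A1 s) s := fun s => (hyc3.differentiable (by simp) s).hasDerivAt
  have hB1d : ∀ s, HasDerivAt B1 (deriv B1 s) s := fun s => (hzc3.differentiable (by simp) s).hasDerivAt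
  -- curvature facts
  have hKpos : ∀ s, 0 < K s := fun s => Real.sqrt_pos.mpr (hsp s)
  have hK2 : ∀ s, K s ^ 2 = A s ^ 2 - B s ^ 2 := fun s => Real.sq_sqrt (hsp s).le
  have hPGk : ∀ s, PGkappa y z s = K s := fun s => by
    simp only [PGkappa, hK, ← hA, ← hB, abs_of_pos (hsp s)]
  have hKd : ∀ s, HasDerivAt K ((A s * A1 s - B s * B1 s) / K s) s := by
    intro s
    have h1 : HasDerivAt (fun t => A t ^ 2 - B t ^ 2)
        (2 * A s ^ 1 * A1 s - 2 * B s ^ 1 * B1 s) s := ((hAd s).pow 2).sub ((hBd s).pow 2)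
    have h2 := (Real.hasDerivAt_sqrt (ne_of_gt (hsp s))).comp s h1
    refine h2.congr_deriv ?_
    have := (hKpos s).ne'
    rw [hK] at this ⊢
    field_simp
  -- principal normal component derivatives
  have hfd : ∀ s, HasDerivAt (fun t => A t / K t)
      (B s * (A s * B1 s - B s * A1 s) / K s ^ 3) s := by
    intro s
    have h1 := (hAd s).div (hKd s) (hKpos s).ne'
    refine h1.congr_deriv ?_
    have h0 := (hKpos s).ne'
    field_simp
    linear_combination (A1 s) * hK2 s
  have hgd : ∀ s, HasDerivAt (fun t => B t / K t)
      (A s * (A s * B1 s - B s * A1 s) / K s ^ 3) s := by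
    intro s
    have h1 := (hBd s).div (hKd s) (hKpos s).ne'
    refine h1.congr_deriv ?_
    have h0 := (hKpos s).ne'
    field_simp
    linear_combination (B1 s) * hK2 s
  -- second derivatives of normal components
  set F2 : ℝ → ℝ := fun s =>
      ((B1 s * (A s * B1 s - B s * A1 s) + B s * (A s * deriv B1 s - B s * deriv A1 s)) * K s ^ 2
        - 3 * (B s * (A s * B1 s - B s * A1 s)) * (A s * A1 s - B s * B1 s)) / K s ^ 5 with hF2
  set G2 : ℝ → ℝ := fun s =>
      ((A1 s * (A s * B1 s - B s * A1 s) + A s * (A s * deriv B1 s - B s * deriv A1 s)) * K s ^ 2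
        - 3 * (A s * (A s * B1 s - B s * A1 s)) * (A s * A1 s - B s * B1 s)) / K s ^ 5 with hG2
  have hfd2 : ∀ s, HasDerivAt (fun t => B t * (A t * B1 t - B t * A1 t) / K t ^ 3) (F2 s) s := by
    intro s
    have hu : HasDerivAt (fun t => B t * (A t * B1 t - B t * A1 t))
        (B1 s * (A s * B1 s - B s * A1 s) +
          B s * ((A1 s * B1 s + A s * deriv B1 s) - (B1 s * A1 s + B s * deriv A1 s))) s :=
      (hBd s).mul (((hAd s).mul (hB1d s)).sub ((hBd s).mul (hA1d s)))
    have hv : HasDerivAt (fun t => K t ^ 3)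
        (3 * K s ^ 2 * ((A s * A1 s - B s * B1 s) / K s)) s := (hKd s).pow 3
    have h1 := hu.div hv (pow_ne_zero 3 (hKpos s).ne')
    refine h1.congr_deriv ?_
    have h0 := (hKpos s).ne'
    rw [hF2]
    field_simp
    linear_combination (0:ℝ) * hK2 s
  have hgd2 : ∀ s, HasDerivAt (fun t => A t * (A t * B1 t - B t * A1 t) / K t ^ 3) (G2 s) s := by
    intro s
    have hu : HasDerivAt (fun t => A t * (A t * B1 t - B t * A1 t))
        (A1 s * (A s * B1 s - B s * A1 s) +
          A s * ((A1 s * B1 s + A s * deriv B1 s) - (B1 s * A1 s + B s * deriv A1 s))) s :=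
      (hAd s).mul (((hAd s).mul (hB1d s)).sub ((hBd s).mul (hA1d s)))
    have hv : HasDerivAt (fun t => K t ^ 3)
        (3 * K s ^ 2 * ((A s * A1 s - B s * B1 s) / K s)) s := (hKd s).pow 3
    have h1 := hu.div hv (pow_ne_zero 3 (hKpos s).ne')
    refine h1.congr_deriv ?_
    have h0 := (hKpos s).ne'
    rw [hG2]
    field_simp
    linear_combination (0:ℝ) * hK2 s
  -- rewrite α₁ componentwise
  have hα₁' : α₁ = fun s => (s, y s + lam * (A s / K s), z s + lam * (B s / K s)) := by
    rw [hα₁]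
    funext s
    simp [PGcurve, PGN, hPGk s, ← hA, ← hB, Prod.ext_iff, smul_eq_mul, div_eq_inv_mul, mul_assoc]
  have hd1 : ∀ s, HasDerivAt α₁
      ((1 : ℝ), deriv y s + lam * (B s * (A s * B1 s - B s * A1 s) / K s ^ 3),
        deriv z s + lam * (A s * (A s * B1 s - B s * A1 s) / K s ^ 3)) s := by
    intro s
    rw [hα₁']
    exact (hasDerivAt_id' s).prodMk
      (((hyd s).add ((hfd s).const_mul lam)).prodMk ((hzd s).add ((hgd s).const_mul lam)))
  have hda : deriv α₁ = fun s =>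
      ((1 : ℝ), deriv y s + lam * (B s * (A s * B1 s - B s * A1 s) / K s ^ 3),
        deriv z s + lam * (A s * (A s * B1 s - B s * A1 s) / K s ^ 3)) :=
    funext fun s => (hd1 s).deriv
  have hd2 : ∀ s, HasDerivAt (deriv α₁)
      ((0 : ℝ), A s + lam * F2 s, B s + lam * G2 s) s := by
    intro s
    rw [hda]
    exact (hasDerivAt_const s (1:ℝ)).prodMk
      (((hy1d s).add ((hfd2 s).const_mul lam)).prodMk ((hz1d s).add ((hgd2 s).const_mul lam)))
  have hdd : ∀ s, deriv (deriv α₁) s = ((0 : ℝ), A s + lam * F2 s, B s + lam * G2 s) :=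
    fun s => (hd2 s).deriv
  -- final computation
  intro s
  have h0 := (hKpos s).ne'
  rw [hdd s]
  simp only [PGdot, PGN, PGtau, hPGk s, ← hA, ← hB, ← hA1, ← hB1, smul_eq_mul, Prod.smul_mk]
  rw [hF2, hG2]
  field_simp
  linear_combination (-(K s ^ 5)) * hK2 s

/-- Theorem 4.2: a Type I admissible curve `α` in `G₃¹` (with `y''² − z''² > 0`)
is an admissible Mannheim curve — i.e. for `α₁ = α + λ • N`, the principal
normal `N` of `α` is the binormal direction of `α₁`, expressed as
`⟨α₁'', N⟩ = 0` — if and only if `κ = −λτ²` for the constant `λ ≠ 0`. -/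
theorem pseudo_galilean_mannheim_characterization
    (y z : ℝ → ℝ)
    (hy : ContDiff ℝ (⊤ : ℕ∞) y) (hz : ContDiff ℝ (⊤ : ℕ∞) z)
    (hsp : ∀ s, 0 < deriv (deriv y) s ^ 2 - deriv (deriv z) s ^ 2)
    (lam : ℝ) (hlam : lam ≠ 0)
    (α₁ : ℝ → ℝ × ℝ × ℝ) (hα₁ : α₁ = fun s => PGcurve y z s + lam • PGN y z s) :
    (∀ s : ℝ, PGdot (deriv (deriv α₁) s) (PGN y z s) = 0) ↔
      (∀ s : ℝ, PGkappa y z s = -lam * (PGtau y z s) ^ 2) := by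
  have hkey := key y z hy hz hsp lam α₁ hα₁
  constructor
  · intro h s
    have h1 := hkey s
    have h2 := h s
    linarith
  · intro h s
    have h1 := hkey s
    have h2 := h s
    linarith
end
end

section
/- (Theorem 4.3) Let β : ℝ → ℝ³, β(s) = (s, y(s), 0), be an admissible curve of Type II in the pseudo-Galilean space G₃¹ with frame T(s) = (1, y'(s), 0), N(s) = (0, a₂(s), a₃(s)), B(s) = (0, a₃(s), a₂(s)), where a₂, a₃, y, φ are smooth, a₂(s)² − a₃(s)² = ε with ε ∈ {1, −1}, a₃(s) ≠ 0, the curvature is κ(s) = y''(s) and the torsion is τ(s) = a₂'(s)/a₃(s), and the Frenet formulas T'(s) = κ(s)·(cosh φ(s)·N(s) − sinh φ(s)·B(s)), N'(s) = τ(s)·B(s), B'(s) = τ(s)·N(s) hold. Let λ be a nonzero real constant and set β₁(s) = β(s) + λ·N(s). Then the Mannheim condition ⟨β₁''(s), N(s)⟩ = 0 for all s (where ⟨·,·⟩ is the pseudo-Galilean scalar product of isotropic vectors) holds if and only if κ(s) = −(λ/cosh φ(s))·τ(s)² for all s. -/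
/- Pseudo-Galilean space G₃¹ identified with ℝ³ = ℝ × ℝ × ℝ.
An admissible curve of Type I is α(s) = (s, y(s), z(s)) with y''² − z''² ≠ 0. -/

noncomputable section

/-- Derivative of a triple-valued function, componentwise. -/
lemma deriv_triple_aux (f g h : ℝ → ℝ) (s : ℝ)
    (hf : DifferentiableAt ℝ f s) (hg : DifferentiableAt ℝ g s)
    (hh : DifferentiableAt ℝ h s) :
    deriv (fun t => ((f t, g t, h t) : ℝ × ℝ × ℝ)) s
      = (deriv f s, deriv g s, deriv h s) :=
  (hf.hasDerivAt.prodMk (hg.hasDerivAt.prodMk hh.hasDerivAt)).deriv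


/-- Theorem 4.3: for a Type II admissible curve `β(s) = (s, y(s), 0)` in `G₃¹`
with frame `T = (1, y', 0)`, `N = (0, a₂, a₃)`, `B = (0, a₃, a₂)`, curvature
`κ = y''`, torsion `τ = a₂'/a₃`, satisfying the Type II Frenet formulas, the
Mannheim condition `⟨β₁'', N⟩ = 0` for `β₁ = β + λ • N` holds if and only if
`κ = −(λ/cosh φ)·τ²`. -/

theorem pseudo_galilean_typeII_mannheim_characterization
    (y a₂ a₃ φ : ℝ → ℝ)
    (hy : ContDiff ℝ (⊤ : ℕ∞) y) (ha₂ : ContDiff ℝ (⊤ : ℕ∞) a₂) (ha₃ : ContDiff ℝ (⊤ : ℕ∞) a₃)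
    (hφ : ContDiff ℝ (⊤ : ℕ∞) φ)
    (ε : ℝ) (hε : ε = 1 ∨ ε = -1)
    (hunit : ∀ s, a₂ s ^ 2 - a₃ s ^ 2 = ε)
    (ha₃ne : ∀ s, a₃ s ≠ 0)
    (β : ℝ → ℝ × ℝ × ℝ) (hβ : β = fun s => (s, y s, (0 : ℝ)))
    (T N B : ℝ → ℝ × ℝ × ℝ)
    (hT : T = fun s => ((1 : ℝ), deriv y s, (0 : ℝ)))
    (hN : N = fun s => ((0 : ℝ), a₂ s, a₃ s))
    (hB : B = fun s => ((0 : ℝ), a₃ s, a₂ s))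
    (κ τ : ℝ → ℝ)
    (hκ : κ = fun s => deriv (deriv y) s)
    (hτ : τ = fun s => deriv a₂ s / a₃ s)
    (hfrenet : ∀ s,
      deriv T s = κ s • (Real.cosh (φ s) • N s - Real.sinh (φ s) • B s) ∧
      deriv N s = τ s • B s ∧
      deriv B s = τ s • N s)
    (lam : ℝ) (hlam : lam ≠ 0)
    (β₁ : ℝ → ℝ × ℝ × ℝ) (hβ₁ : β₁ = fun s => β s + lam • N s) :
    (∀ s : ℝ, PGdot (deriv (deriv β₁) s) (N s) = 0) ↔
      (∀ s : ℝ, κ s = -(lam / Real.cosh (φ s)) * (τ s) ^ 2) := by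

  -- basic differentiability facts
  have hyd : Differentiable ℝ y := hy.differentiable (by simp)
  have ha₂d : Differentiable ℝ a₂ := ha₂.differentiable (by simp)
  have ha₃d : Differentiable ℝ a₃ := ha₃.differentiable (by simp)
  have hy'd : Differentiable ℝ (deriv y) :=
    ((contDiff_infty_iff_deriv.mp (hy.of_le (by simp))).2).differentiable (by simp)
  have ha₂'d : Differentiable ℝ (deriv a₂) :=
    ((contDiff_infty_iff_deriv.mp (ha₂.of_le (by simp))).2).differentiable (by simp)
  have ha₃'d : Differentiable ℝ (deriv a₃) :=
    ((contDiff_infty_iff_deriv.mp (ha₃.of_le (by simp))).2).differentiable (by simp)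
  -- Frenet N' componentwise
  have hNderiv : ∀ s, deriv N s = ((0 : ℝ), deriv a₂ s, deriv a₃ s) := by
    intro s
    rw [hN]
    have := deriv_triple_aux (fun _ => (0:ℝ)) a₂ a₃ s (differentiableAt_const _)
      (ha₂d s) (ha₃d s)
    simpa using this
  have ha2' : ∀ s, deriv a₂ s = τ s * a₃ s := by
    intro s
    have h := (hfrenet s).2.1
    rw [hNderiv s, hB] at h
    have := congrArg (fun p : ℝ × ℝ × ℝ => p.2.1) h
    simpa using this
  have ha3' : ∀ s, deriv a₃ s = τ s * a₂ s := by
    intro s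
    have h := (hfrenet s).2.1
    rw [hNderiv s, hB] at h
    have := congrArg (fun p : ℝ × ℝ × ℝ => p.2.2) h
    simpa using this
  -- Frenet T' componentwise
  have hTderiv : ∀ s, deriv T s = ((0 : ℝ), deriv (deriv y) s, (0 : ℝ)) := by
    intro s
    rw [hT]
    have := deriv_triple_aux (fun _ => (1:ℝ)) (deriv y) (fun _ => (0:ℝ)) s
      (differentiableAt_const _) (hy'd s) (differentiableAt_const _)
    simpa using this
  have hT2 : ∀ s, deriv (deriv y) s
      = κ s * (Real.cosh (φ s) * a₂ s - Real.sinh (φ s) * a₃ s) := by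
    intro s
    have h := (hfrenet s).1
    rw [hTderiv s, hN, hB] at h
    have := congrArg (fun p : ℝ × ℝ × ℝ => p.2.1) h
    simpa [mul_sub] using this
  have hT3 : ∀ s, (0 : ℝ)
      = κ s * (Real.cosh (φ s) * a₃ s - Real.sinh (φ s) * a₂ s) := by
    intro s
    have h := (hfrenet s).1
    rw [hTderiv s, hN, hB] at h
    have := congrArg (fun p : ℝ × ℝ × ℝ => p.2.2) h
    simpa [mul_sub] using this
  -- relation to κ
  have hκy : ∀ s, κ s = deriv (deriv y) s := fun s => by rw [hκ]
  -- second-order identity: a₂ a₂'' − a₃ a₃'' = ε τ²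
  have hcombo : ∀ s, a₂ s * deriv (deriv a₂) s - a₃ s * deriv (deriv a₃) s
      = ε * τ s ^ 2 := by
    intro s
    have hg : (fun t => a₂ t * deriv a₂ t - a₃ t * deriv a₃ t) = fun _ => (0:ℝ) := by
      funext t
      rw [ha2' t, ha3' t]; ring
    have hderiv0 : deriv (fun t => a₂ t * deriv a₂ t - a₃ t * deriv a₃ t) s = 0 := by
      rw [hg]; simp
    have hval : deriv (fun t => a₂ t * deriv a₂ t - a₃ t * deriv a₃ t) s
        = (deriv a₂ s * deriv a₂ s + a₂ s * deriv (deriv a₂) s)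
          - (deriv a₃ s * deriv a₃ s + a₃ s * deriv (deriv a₃) s) := by
      exact (((ha₂d s).hasDerivAt.mul (ha₂'d s).hasDerivAt).sub
        ((ha₃d s).hasDerivAt.mul (ha₃'d s).hasDerivAt)).deriv
    have h0 : (deriv a₂ s * deriv a₂ s + a₂ s * deriv (deriv a₂) s)
          - (deriv a₃ s * deriv a₃ s + a₃ s * deriv (deriv a₃) s) = 0 := by
      rw [← hval]; exact hderiv0
    have hu := hunit s
    rw [ha2' s, ha3' s] at h0
    nlinarith [h0, hu]
  -- explicit form of β₁ and its derivatives
  have hβ₁eq : β₁ = fun s => ((s : ℝ), y s + lam * a₂ s, lam * a₃ s) := by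
    rw [hβ₁, hβ, hN]
    funext s
    simp [Prod.ext_iff, smul_eq_mul]
  have hβ₁' : deriv β₁ = fun s => ((1 : ℝ), deriv y s + lam * deriv a₂ s,
      lam * deriv a₃ s) := by
    funext s
    rw [hβ₁eq]
    have h1 : HasDerivAt (fun t : ℝ => t) 1 s := hasDerivAt_id s
    have h2 : HasDerivAt (fun t => y t + lam * a₂ t)
        (deriv y s + lam * deriv a₂ s) s :=
      (hyd s).hasDerivAt.add ((ha₂d s).hasDerivAt.const_mul lam)
    have h3 : HasDerivAt (fun t => lam * a₃ t) (lam * deriv a₃ s) s :=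
      (ha₃d s).hasDerivAt.const_mul lam
    exact (h1.prodMk (h2.prodMk h3)).deriv
  have hβ₁'' : ∀ s, deriv (deriv β₁) s = ((0 : ℝ),
      deriv (deriv y) s + lam * deriv (deriv a₂) s, lam * deriv (deriv a₃) s) := by
    intro s
    rw [hβ₁']
    have h1 : HasDerivAt (fun _ : ℝ => (1:ℝ)) 0 s := hasDerivAt_const _ _
    have h2 : HasDerivAt (fun t => deriv y t + lam * deriv a₂ t)
        (deriv (deriv y) s + lam * deriv (deriv a₂) s) s :=
      (hy'd s).hasDerivAt.add ((ha₂'d s).hasDerivAt.const_mul lam)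
    have h3 : HasDerivAt (fun t => lam * deriv a₃ t) (lam * deriv (deriv a₃) s) s :=
      (ha₃'d s).hasDerivAt.const_mul lam
    exact (h1.prodMk (h2.prodMk h3)).deriv
  -- key formula for the Mannheim quantity
  have hkey : ∀ s, PGdot (deriv (deriv β₁) s) (N s)
      = κ s * a₂ s + lam * (ε * τ s ^ 2) := by
    intro s
    rw [hβ₁'' s, hN]
    show (deriv (deriv y) s + lam * deriv (deriv a₂) s) * a₂ s
      - lam * deriv (deriv a₃) s * a₃ s = _
    have hc := hcombo s
    rw [hκy s]
    linear_combination lam * hc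
  -- if κ s ≠ 0 then a₂ s = cosh φ s and ε = 1
  have hframe : ∀ s, κ s ≠ 0 → a₂ s = Real.cosh (φ s) ∧ ε = 1 := by
    intro s hk
    have e2 := hT2 s
    rw [← hκy s] at e2
    have e2'' : κ s * (Real.cosh (φ s) * a₂ s - Real.sinh (φ s) * a₃ s)
        = κ s * 1 := by rw [mul_one]; exact e2.symm
    have e2' : Real.cosh (φ s) * a₂ s - Real.sinh (φ s) * a₃ s = 1 :=
      mul_left_cancel₀ hk e2''
    have e3' : Real.cosh (φ s) * a₃ s - Real.sinh (φ s) * a₂ s = 0 := by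
      have := (hT3 s).symm
      rcases mul_eq_zero.mp this with h | h
      · exact absurd h hk
      · exact h
    have hch : Real.cosh (φ s) ^ 2 - Real.sinh (φ s) ^ 2 = 1 :=
      Real.cosh_sq_sub_sinh_sq (φ s)
    have ha2c : a₂ s = Real.cosh (φ s) := by
      linear_combination Real.cosh (φ s) * e2' + Real.sinh (φ s) * e3' - a₂ s * hch
    have ha3c : a₃ s = Real.sinh (φ s) := by
      have h' : Real.cosh (φ s) * a₃ s = Real.cosh (φ s) * Real.sinh (φ s) := by
        linear_combination e3' + Real.sinh (φ s) * ha2c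
      exact mul_left_cancel₀ (ne_of_gt (Real.cosh_pos _)) h'
    refine ⟨ha2c, ?_⟩
    have := hunit s
    rw [ha2c, ha3c] at this
    nlinarith [this, hch]
  have hεne : ε ≠ 0 := by rcases hε with h | h <;> rw [h] <;> norm_num
  constructor
  · intro h s
    have hs := h s
    rw [hkey s] at hs
    by_cases hk : κ s = 0
    · have hτ0 : τ s ^ 2 = 0 := by
        rw [hk] at hs
        have : lam * (ε * τ s ^ 2) = 0 := by linarith
        rcases mul_eq_zero.mp this with h' | h'
        · exact absurd h' hlam
        · rcases mul_eq_zero.mp h' with h'' | h''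
          · exact absurd h'' hεne
          · exact h''
      rw [hk, hτ0]; ring
    · obtain ⟨ha2c, hε1⟩ := hframe s hk
      rw [ha2c, hε1] at hs
      have hcpos : (0:ℝ) < Real.cosh (φ s) := Real.cosh_pos _
      apply mul_right_cancel₀ (ne_of_gt hcpos)
      field_simp
      linear_combination hs
  · intro h s
    have hs := h s
    rw [hkey s]
    by_cases hk : κ s = 0
    · have hcpos : (0:ℝ) < Real.cosh (φ s) := Real.cosh_pos _
      have hτ0 : τ s ^ 2 = 0 := by
        rw [hk] at hs
        have h0 : lam / Real.cosh (φ s) * τ s ^ 2 = 0 := by linarith [hs]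
        rcases mul_eq_zero.mp h0 with h' | h'
        · exact absurd h' (div_ne_zero hlam (ne_of_gt hcpos))
        · exact h'
      rw [hk, hτ0]; ring
    · obtain ⟨ha2c, hε1⟩ := hframe s hk
      rw [ha2c, hε1]
      have hcpos : (0:ℝ) < Real.cosh (φ s) := Real.cosh_pos _
      rw [hs]
      field_simp
      ring
end
end

section
/- (Remark 4.5) Let λ be a nonzero real number, κ₁ : ℝ → ℝ a continuous function, c₀ ∈ ℝ, and define θ(u) = c₀ + ∫₀ᵘ κ₁(t) dt and τ₁(u) = −(1/λ)·tanh θ(u). Then τ₁ is differentiable and satisfies τ₁'(u) = (κ₁(u)/λ)·(λ²·τ₁(u)² − 1) for all u. In particular, the equation τ₁' = (κ₁/λ)(λ²τ₁² − 1) characterizing the torsion of an admissible Mannheim partner curve in the pseudo-Galilean space G₃¹ admits this explicit solution. -/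
open Real

theorem Real.hasDerivAt_tanh (x : ℝ) : HasDerivAt tanh (1 - tanh x ^ 2) x := by
  have hcosh : cosh x ≠ 0 := (cosh_pos x).ne'
  have hquot := (hasDerivAt_sinh x).div (hasDerivAt_cosh x) hcosh
  have htanh : sinh / cosh = tanh := funext fun y => (tanh_eq_sinh_div_cosh y).symm
  rw [htanh] at hquot
  refine hquot.congr_deriv ?_
  rw [tanh_eq_sinh_div_cosh]
  field_simp

theorem HasDerivAt.neg_inv_mul_tanh {lam : ℝ} (hlam : lam ≠ 0) {θ : ℝ → ℝ} {κ u : ℝ}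
    (hθ : HasDerivAt θ κ u) :
    HasDerivAt (fun x => -(1 / lam) * tanh (θ x))
      (κ / lam * (lam ^ 2 * (-(1 / lam) * tanh (θ u)) ^ 2 - 1)) u := by
  refine (((hasDerivAt_tanh (θ u)).comp u hθ).const_mul (-(1 / lam))).congr_deriv ?_
  field_simp
  ring

/-- Remark 4.5: with `θ(u) = c₀ + ∫₀ᵘ κ₁(t) dt` and `τ₁ = −(1/λ)·tanh θ`
(`λ ≠ 0`, `κ₁` continuous), `τ₁` is differentiable and solves
`τ₁' = (κ₁/λ)(λ²τ₁² − 1)`, the equation characterizing the torsion of an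
admissible Mannheim partner curve in the pseudo-Galilean space `G₃¹`. -/
theorem pseudo_galilean_mannheim_torsion_explicit_solution
    (lam : ℝ) (hlam : lam ≠ 0)
    (κ₁ : ℝ → ℝ) (hκ₁ : Continuous κ₁) (c₀ : ℝ)
    (θ τ₁ : ℝ → ℝ)
    (hθ : θ = fun u => c₀ + ∫ t in (0 : ℝ)..u, κ₁ t)
    (hτ₁ : τ₁ = fun u => -(1 / lam) * Real.tanh (θ u)) :
    Differentiable ℝ τ₁ ∧
      ∀ u, deriv τ₁ u = (κ₁ u / lam) * (lam ^ 2 * (τ₁ u) ^ 2 - 1) := by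
  have hθ' (u : ℝ) : HasDerivAt θ (κ₁ u) u := by
    rw [hθ]
    exact ((hκ₁.integral_hasStrictDerivAt 0 u).hasDerivAt).const_add c₀
  have hτ₁' (u : ℝ) : HasDerivAt τ₁ (κ₁ u / lam * (lam ^ 2 * τ₁ u ^ 2 - 1)) u := by
    subst hτ₁
    exact (hθ' u).neg_inv_mul_tanh hlam
  exact ⟨fun u => (hτ₁' u).differentiableAt, fun u => (hτ₁' u).deriv⟩
end

section
/- Let λ be a nonzero real number, κ₁ : ℝ → ℝ a continuous function, c₀ ∈ ℝ, define θ(u) = c₀ − ∫₀ᵘ κ₁(t) dt, and let J ⊆ ℝ be an interval on which cos θ(u) ≠ 0. Define τ₁(u) = −(1/λ)·tan θ(u) on J. Then τ₁ is differentiable on J and satisfies τ₁'(u) = (κ₁(u)/λ)·(λ²·τ₁(u)² + 1) for all u in J. In particular, the equation τ₁' = (κ₁/λ)(λ²τ₁² + 1) characterizing the torsion of a Mannheim partner curve in the Galilean space G₃ admits this explicit solution. -/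
/-! Since `tan' = 1 + tan²`, the function `τ = -(1/λ) tan θ` satisfies
`τ' = (-θ'/λ)(λ²τ² + 1)`, and `θ' = -κ₁` by the fundamental theorem of calculus. -/

open Real

theorem Real.hasDerivAt_tan_eq_one_add_tan_sq {x : ℝ} (h : cos x ≠ 0) :
    HasDerivAt tan (1 + tan x ^ 2) x := by
  convert hasDerivAt_tan h using 1
  rw [one_div, ← inv_one_add_tan_sq h, inv_inv]

theorem hasDerivAt_neg_inv_mul_tan_comp {θ : ℝ → ℝ} {θ' lam u : ℝ} (hlam : lam ≠ 0)
    (hθ : HasDerivAt θ θ' u) (hcos : cos (θ u) ≠ 0) :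
    HasDerivAt (fun v => -(1 / lam) * tan (θ v))
      (-θ' / lam * (lam ^ 2 * (-(1 / lam) * tan (θ u)) ^ 2 + 1)) u := by
  refine (((hasDerivAt_tan_eq_one_add_tan_sq hcos).comp u hθ).const_mul
    (-(1 / lam))).congr_deriv ?_
  field_simp
  ring

theorem galilean_mannheim_torsion_explicit_solution_general
    (lam : ℝ) (hlam : lam ≠ 0)
    (κ₁ : ℝ → ℝ) (hκ₁ : Continuous κ₁) (c₀ : ℝ)
    (θ τ₁ : ℝ → ℝ)
    (hθ : θ = fun u => c₀ - ∫ t in (0 : ℝ)..u, κ₁ t)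
    (J : Set ℝ)
    (hcos : ∀ u ∈ J, Real.cos (θ u) ≠ 0)
    (hτ₁ : τ₁ = fun u => -(1 / lam) * Real.tan (θ u)) :
    ∀ u ∈ J, DifferentiableAt ℝ τ₁ u ∧
      deriv τ₁ u = (κ₁ u / lam) * (lam ^ 2 * (τ₁ u) ^ 2 + 1) := by
  intro u hu
  have hθ' : HasDerivAt θ (-κ₁ u) u := by
    rw [hθ]
    exact (hκ₁.integral_hasStrictDerivAt 0 u).hasDerivAt.const_sub c₀
  have hτ₁' := hasDerivAt_neg_inv_mul_tan_comp hlam hθ' (hcos u hu)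
  rw [← hτ₁] at hτ₁'
  refine ⟨hτ₁'.differentiableAt, ?_⟩
  rw [hτ₁'.deriv, hτ₁, neg_neg]

/-- With `θ(u) = c₀ − ∫₀ᵘ κ₁(t) dt` and `τ₁ = −(1/λ)·tan θ` on an interval `J`
where `cos θ` does not vanish (`λ ≠ 0`, `κ₁` continuous), `τ₁` is
differentiable on `J` and solves `τ₁' = (κ₁/λ)(λ²τ₁² + 1)` there, the equation
characterizing the torsion of a Mannheim partner curve in the Galilean
space `G₃`. -/
theorem galilean_mannheim_torsion_explicit_solution
    (lam : ℝ) (hlam : lam ≠ 0)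
    (κ₁ : ℝ → ℝ) (hκ₁ : Continuous κ₁) (c₀ : ℝ)
    (θ τ₁ : ℝ → ℝ)
    (hθ : θ = fun u => c₀ - ∫ t in (0 : ℝ)..u, κ₁ t)
    (J : Set ℝ) (hJ : J.OrdConnected)
    (hcos : ∀ u ∈ J, Real.cos (θ u) ≠ 0)
    (hτ₁ : τ₁ = fun u => -(1 / lam) * Real.tan (θ u)) :
    ∀ u ∈ J, DifferentiableAt ℝ τ₁ u ∧
      deriv τ₁ u = (κ₁ u / lam) * (lam ^ 2 * (τ₁ u) ^ 2 + 1) :=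
  galilean_mannheim_torsion_explicit_solution_general lam hlam κ₁ hκ₁ c₀ θ τ₁ hθ J hcos hτ₁
end
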